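/- Let x_- < x_+ be real numbers, d = x_+ - x_-, y = (x_- + x_+)/2, and let α ∈ ℝ. Then the set of λ < (π/d)² for which a δ-Neumann eigenfunction for (α, λ) exists is exactly {Λ^N_{α,d}}; the complex vector space consisting of 0 and all δ-Neumann eigenfunctions for (α, Λ^N_{α,d}) is one-dimensional; and for λ = (π/d)² a δ-Neumann eigenfunction exists for every α ∈ ℝ. -/

import Mathlib

/-- The set `Π_d^N = { (π(2k-1)/d)² : k ∈ ℕ, k ≥ 1 }`. -/
noncomputable def PiN (d : ℝ) : Set ℝ :=
  {x | ∃ k : ℕ, 1 ≤ k ∧ x = (Real.pi * (2 * (k : ℝ) - 1) / d) ^ 2}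

/-- The function `F_d^N`. -/
noncomputable def FN (d lam : ℝ) : ℝ :=
  if 0 < lam then 2 * Real.sqrt lam * Real.tan (d * Real.sqrt lam / 2)
  else if lam = 0 then 0
  else -2 * Real.sqrt (-lam) * Real.tanh (d * Real.sqrt (-lam) / 2)

/-- `u` is a δ-Neumann eigenfunction for `(α, λ)` on `[x₋, x₊]`. -/
def IsDeltaNeumannEF (xm xp α lam : ℝ) (u : ℝ → ℂ) : Prop :=
  ContinuousOn u (Set.Icc xm xp) ∧
  (∃ x ∈ Set.Icc xm xp, u x ≠ 0) ∧
  ∃ v w : ℝ → ℂ,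
    ContDiff ℝ 2 v ∧ ContDiff ℝ 2 w ∧
    Set.EqOn u v (Set.Icc xm ((xm + xp) / 2)) ∧
    Set.EqOn u w (Set.Icc ((xm + xp) / 2) xp) ∧
    (∀ x ∈ Set.Icc xm ((xm + xp) / 2), -(deriv (deriv v) x) = (lam : ℂ) * v x) ∧
    (∀ x ∈ Set.Icc ((xm + xp) / 2) xp, -(deriv (deriv w) x) = (lam : ℂ) * w x) ∧
    deriv v xm = 0 ∧ deriv w xp = 0 ∧
    deriv w ((xm + xp) / 2) - deriv v ((xm + xp) / 2) = (α : ℂ) * u ((xm + xp) / 2)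

open Real Set

private lemma hasDerivAt_Tcos (a μ : ℂ) (s x : ℝ) :
    HasDerivAt (fun x : ℝ => a * Complex.cos (μ * (↑x - ↑s)))
      (-(a * μ * Complex.sin (μ * (↑x - ↑s)))) x := by
  have h1 : HasDerivAt (fun z : ℂ => a * Complex.cos (μ * (z - ↑s)))
      (-(a * μ * Complex.sin (μ * ((x : ℂ) - ↑s)))) (x : ℂ) := by
    have := ((Complex.hasDerivAt_cos (μ * ((x:ℂ) - ↑s))).comp (x : ℂ)
      (((hasDerivAt_id ((x:ℂ))).sub_const (↑s)).const_mul μ)).const_mul a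
    convert this using 1
    · rfl
    · rfl
    · rfl
    · ring
  exact h1.comp_ofReal

private lemma hasDerivAt_Tsin (b μ : ℂ) (s x : ℝ) :
    HasDerivAt (fun x : ℝ => b * Complex.sin (μ * (↑x - ↑s)))
      (b * μ * Complex.cos (μ * (↑x - ↑s))) x := by
  have h1 : HasDerivAt (fun z : ℂ => b * Complex.sin (μ * (z - ↑s)))
      (b * μ * Complex.cos (μ * ((x : ℂ) - ↑s))) (x : ℂ) := by
    have := ((Complex.hasDerivAt_sin (μ * ((x:ℂ) - ↑s))).comp (x : ℂ)
      (((hasDerivAt_id ((x:ℂ))).sub_const (↑s)).const_mul μ)).const_mul b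
    convert this using 1
    · rfl
    · rfl
    · rfl
    · ring
  exact h1.comp_ofReal

private lemma deriv_Tcos (a μ : ℂ) (s : ℝ) :
    deriv (fun x : ℝ => a * Complex.cos (μ * (↑x - ↑s)))
      = fun x : ℝ => -(a * μ * Complex.sin (μ * (↑x - ↑s))) :=
  funext fun x => (hasDerivAt_Tcos a μ s x).deriv

private lemma deriv2_Tcos (a μ : ℂ) (s : ℝ) :
    deriv (deriv (fun x : ℝ => a * Complex.cos (μ * (↑x - ↑s))))
      = fun x : ℝ => -(μ ^ 2) * (a * Complex.cos (μ * (↑x - ↑s))) := by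
  rw [deriv_Tcos]
  funext x
  have : HasDerivAt (fun x : ℝ => -(a * μ * Complex.sin (μ * (↑x - ↑s))))
      (-(μ ^ 2) * (a * Complex.cos (μ * (↑x - ↑s)))) x := by
    have := (hasDerivAt_Tsin (a * μ) μ s x).neg
    convert this using 1
    · rfl
    · rfl
    · ring
  exact this.deriv

private lemma contDiff_Tcos (a μ : ℂ) (s : ℝ) :
    ContDiff ℝ 2 (fun x : ℝ => a * Complex.cos (μ * (↑x - ↑s))) := by
  apply ContDiff.mul contDiff_const
  apply (Complex.contDiff_cos.restrict_scalars ℝ).comp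
  exact contDiff_const.mul (Complex.ofRealCLM.contDiff.sub contDiff_const)

private lemma ode_cos (lam : ℝ) (μ : ℂ) (hμ : μ ^ 2 = (lam : ℂ)) (f : ℝ → ℂ)
    (hf : ContDiff ℝ 2 f) (s t : ℝ)
    (hode : ∀ x ∈ Set.Icc s t, deriv (deriv f) x = -((lam : ℂ) * f x))
    (hs : deriv f s = 0) :
    ∀ x ∈ Set.Icc s t,
      f x = f s * Complex.cos (μ * (↑x - ↑s)) ∧
      deriv f x = -(f s * μ * Complex.sin (μ * (↑x - ↑s))) := by
  set L : (ℂ × ℂ) →L[ℝ] (ℂ × ℂ) :=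
    (ContinuousLinearMap.snd ℝ ℂ ℂ).prod ((-(lam : ℂ)) • (ContinuousLinearMap.fst ℝ ℂ ℂ).restrictScalars ℝ) with hL
  have hLapp : ∀ p : ℂ × ℂ, L p = (p.2, -(lam : ℂ) * p.1) := by
    intro p; rfl
  have hdf : ContDiff ℝ 1 (deriv f) := by
    have h2 : ContDiff ℝ (1 + 1) f := by norm_num; exact hf
    exact (contDiff_succ_iff_deriv.mp h2).2.2
  have hF1' : ∀ x : ℝ, HasDerivAt (fun x : ℝ => (f x, deriv f x))
      (deriv f x, deriv (deriv f) x) x := by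
    intro x
    exact ((hf.differentiable (by norm_num)).differentiableAt.hasDerivAt).prodMk
      ((hdf.differentiable (by norm_num)).differentiableAt.hasDerivAt)
  have hF2' : ∀ x : ℝ, HasDerivAt
      (fun x : ℝ => (f s * Complex.cos (μ * (↑x - ↑s)), -(f s * μ * Complex.sin (μ * (↑x - ↑s)))))
      (-(f s * μ * Complex.sin (μ * (↑x - ↑s))), -((lam:ℂ) * (f s * Complex.cos (μ * (↑x - ↑s))))) x := by
    intro x
    refine HasDerivAt.prodMk (hasDerivAt_Tcos (f s) μ s x) ?_
    have := ((hasDerivAt_Tsin (f s * μ) μ s x)).neg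
    convert this using 1
    · rfl
    · rw [← hμ]; ring
  have key : Set.EqOn (fun x : ℝ => (f x, deriv f x))
      (fun x : ℝ => (f s * Complex.cos (μ * (↑x - ↑s)), -(f s * μ * Complex.sin (μ * (↑x - ↑s)))))
      (Set.Icc s t) := by
    apply ODE_solution_unique (v := fun _ p => L p) (K := ‖L‖₊) (fun _ => L.lipschitz)
    · exact (Continuous.prodMk (hf.continuous) (hdf.continuous)).continuousOn
    · intro x hx
      have := hF1' x
      rw [hLapp]
      simp only [neg_mul]
      rw [hode x (Set.mem_Icc.mpr ⟨hx.1, le_of_lt hx.2⟩)] at this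
      exact this.hasDerivWithinAt
    · apply Continuous.continuousOn
      apply Continuous.prodMk
      · exact (contDiff_Tcos (f s) μ s).continuous
      · fun_prop
    · intro x hx
      have := hF2' x
      rw [hLapp]
      simp only [neg_mul]
      exact this.hasDerivWithinAt
    · simp [hs]
  intro x hx
  have := key hx
  simp only [Prod.mk.injEq] at this
  exact this

private lemma eigen_structure (xm xp : ℝ) (h : xm < xp) (α lam : ℝ) (μ : ℂ)
    (hμ : μ ^ 2 = (lam : ℂ)) (u : ℝ → ℂ) (hu : IsDeltaNeumannEF xm xp α lam u) :
    ∃ a b : ℂ, (a ≠ 0 ∨ b ≠ 0) ∧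
      (∀ x ∈ Set.Icc xm ((xm + xp) / 2), u x = a * Complex.cos (μ * (↑x - ↑xm))) ∧
      (∀ x ∈ Set.Icc ((xm + xp) / 2) xp, u x = b * Complex.cos (μ * (↑x - ↑xp))) ∧
      a * Complex.cos (μ * (↑((xp - xm) / 2))) = b * Complex.cos (μ * (↑((xp - xm) / 2))) ∧
      (b + a) * μ * Complex.sin (μ * (↑((xp - xm) / 2)))
        = ↑α * (a * Complex.cos (μ * (↑((xp - xm) / 2)))) := by
  obtain ⟨hucont, ⟨x₀, hx₀, hx₀ne⟩, v, w, hv, hw, huv, huw, hodev, hodew, hvm, hwp, hjump⟩ := hu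
  set y := (xm + xp) / 2 with hy
  have hxmy : xm ≤ y := by simp only [hy]; linarith
  have hyxp : y ≤ xp := by simp only [hy]; linarith
  -- left piece
  have hvsol := ode_cos lam μ hμ v hv xm y
    (fun x hx => by have := hodev x hx; linear_combination -this) hvm
  -- right piece, reflected
  set g : ℝ → ℂ := fun x => w (xp + y - x) with hg
  have hgc : ContDiff ℝ 2 g := hw.comp (contDiff_const.sub contDiff_id)
  have hgd : ∀ x : ℝ, deriv g x = -deriv w (xp + y - x) := by
    intro x
    exact deriv_comp_const_sub w (xp + y) x
  have hgd2 : ∀ x : ℝ, deriv (deriv g) x = deriv (deriv w) (xp + y - x) := by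
    intro x
    have : deriv g = fun x => -deriv w (xp + y - x) := funext hgd
    rw [this, deriv.fun_neg, deriv_comp_const_sub (deriv w) (xp + y) x, neg_neg]
  have hgsol := ode_cos lam μ hμ g hgc y xp
    (fun x hx => by
      rw [hgd2]
      have hmem : xp + y - x ∈ Set.Icc y xp := by
        constructor <;> [linarith [hx.2]; linarith [hx.1]]
      have := hodew (xp + y - x) hmem
      simp only [hg]
      linear_combination -this)
    (by rw [hgd]; simp [hwp])
  set a : ℂ := v xm with ha
  set b : ℂ := w xp with hb
  have hgy : g y = b := by simp [hg, hb]
  -- u on left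
  have hul : ∀ x ∈ Set.Icc xm y, u x = a * Complex.cos (μ * (↑x - ↑xm)) := by
    intro x hx
    rw [huv hx, (hvsol x hx).1]
  -- u on right
  have hur : ∀ x ∈ Set.Icc y xp, u x = b * Complex.cos (μ * (↑x - ↑xp)) := by
    intro x hx
    have hmem : xp + y - x ∈ Set.Icc y xp := by
      constructor <;> [linarith [hx.2]; linarith [hx.1]]
    have h1 := (hgsol (xp + y - x) hmem).1
    have h2 : g (xp + y - x) = w x := congrArg w (by ring)
    rw [h2, hgy] at h1
    rw [huw hx, h1]
    congr 1
    have h3 : μ * ((↑(xp + y - x) : ℂ) - ↑y) = -(μ * (↑x - ↑xp)) := by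
      push_cast
      ring
    rw [h3, Complex.cos_neg]
  -- derivative values at y
  have hvdy : deriv v y = -(a * μ * Complex.sin (μ * ↑((xp - xm) / 2))) := by
    have := (hvsol y ⟨hxmy, le_refl y⟩).2
    rw [this]
    congr 3
    rw [hy]
    push_cast
    ring
  have hwdy : deriv w y = b * μ * Complex.sin (μ * ↑((xp - xm) / 2)) := by
    have h1 := (hgsol xp ⟨hyxp, le_refl xp⟩).2
    rw [hgd xp, hgy] at h1
    have harg : (xp : ℝ) + y - xp = y := by ring
    rw [harg] at h1
    have h2 : Complex.sin (μ * (↑xp - ↑y)) = Complex.sin (μ * ↑((xp - xm) / 2)) := by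
      congr 2
      rw [hy]
      push_cast
      ring
    rw [h2] at h1
    linear_combination -h1
  have hcy : ((y : ℂ) - ↑xm) = ↑((xp - xm) / 2) := by rw [hy]; push_cast; ring
  have huy : u y = a * Complex.cos (μ * ↑((xp - xm) / 2)) := by
    rw [hul y ⟨hxmy, le_refl y⟩, hcy]
  have hcc : a * Complex.cos (μ * ↑((xp - xm) / 2)) = b * Complex.cos (μ * ↑((xp - xm) / 2)) := by
    rw [← huy]
    have := hur y ⟨le_refl y, hyxp⟩
    rw [this]
    congr 1
    have h3 : μ * ((y : ℂ) - ↑xp) = -(μ * ↑((xp - xm) / 2)) := by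
      rw [hy]; push_cast; ring
    rw [h3, Complex.cos_neg]
  refine ⟨a, b, ?_, hul, hur, hcc, ?_⟩
  · by_contra hab
    push_neg at hab
    obtain ⟨ha0, hb0⟩ := hab
    apply hx₀ne
    rcases le_total x₀ y with hle | hle
    · rw [hul x₀ ⟨hx₀.1, hle⟩, ha0, zero_mul]
    · rw [hur x₀ ⟨hle, hx₀.2⟩, hb0, zero_mul]
  · rw [hwdy, hvdy, huy] at hjump
    linear_combination hjump

private lemma eigen_construct (xm xp : ℝ) (h : xm < xp) (α lam : ℝ) (μ : ℂ)
    (hμ : μ ^ 2 = (lam : ℂ)) (a b : ℂ) (ha : a ≠ 0)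
    (hcont : a * Complex.cos (μ * ↑((xp - xm) / 2)) = b * Complex.cos (μ * ↑((xp - xm) / 2)))
    (hjump : (b + a) * μ * Complex.sin (μ * ↑((xp - xm) / 2))
      = ↑α * (a * Complex.cos (μ * ↑((xp - xm) / 2)))) :
    IsDeltaNeumannEF xm xp α lam (fun x =>
      if x ≤ (xm + xp) / 2 then a * Complex.cos (μ * (↑x - ↑xm))
      else b * Complex.cos (μ * (↑x - ↑xp))) := by
  set y := (xm + xp) / 2 with hy
  have hxmy : xm ≤ y := by rw [hy]; linarith
  have hyxp : y ≤ xp := by rw [hy]; linarith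
  set v : ℝ → ℂ := fun x => a * Complex.cos (μ * (↑x - ↑xm)) with hv
  set w : ℝ → ℂ := fun x => b * Complex.cos (μ * (↑x - ↑xp)) with hw
  have hcy : ((y : ℂ) - ↑xm) = ↑((xp - xm) / 2) := by rw [hy]; push_cast; ring
  have hcy' : μ * ((y : ℂ) - ↑xp) = -(μ * ↑((xp - xm) / 2)) := by rw [hy]; push_cast; ring
  have hvwy : v y = w y := by
    rw [hv, hw]
    simp only
    rw [hcy, mul_comm μ ((y:ℂ) - ↑xp), mul_comm ((y:ℂ) - ↑xp) μ, hcy', Complex.cos_neg]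
    exact hcont
  refine ⟨?_, ⟨xm, ⟨le_refl xm, le_of_lt h⟩, ?_⟩, v, w, contDiff_Tcos a μ xm, contDiff_Tcos b μ xp,
    ?_, ?_, ?_, ?_, ?_, ?_, ?_⟩
  · apply Continuous.continuousOn
    exact Continuous.if_le ((contDiff_Tcos a μ xm).continuous) ((contDiff_Tcos b μ xp).continuous)
      continuous_id continuous_const (fun x hx => by rw [hx]; exact hvwy)
  · have : xm ≤ y := hxmy
    simp only [if_pos this, sub_self, mul_zero, Complex.cos_zero, mul_one]
    exact ha
  · intro x hx
    exact if_pos (show x ≤ y from hx.2)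
  · intro x hx
    simp only
    by_cases hxy : x ≤ y
    · have : x = y := le_antisymm hxy hx.1
      rw [if_pos hxy, this]
      exact hvwy
    · rw [if_neg hxy]
  · intro x hx
    rw [deriv2_Tcos a μ xm, hμ]
    simp only [hv]
    ring
  · intro x hx
    rw [deriv2_Tcos b μ xp, hμ]
    simp only [hw]
    ring
  · rw [deriv_Tcos]
    simp
  · rw [deriv_Tcos]
    simp
  · rw [deriv_Tcos, deriv_Tcos]
    simp only [if_pos (le_refl y)]
    have h1 : μ * ((y : ℂ) - ↑xm) = μ * ↑((xp - xm) / 2) := by rw [hcy]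
    have h2 : Complex.sin (μ * ((y:ℂ) - ↑xp)) = -Complex.sin (μ * ↑((xp - xm) / 2)) := by
      rw [hcy', Complex.sin_neg]
    rw [h1, h2]
    rw [if_pos (show (xm + xp) / 2 ≤ y from le_refl y)]
    linear_combination hjump

private lemma FN_iff (d : ℝ) (hd : 0 < d) (lam : ℝ) (hlam : lam < (Real.pi / d) ^ 2) :
    ∃ μ : ℂ, μ ^ 2 = (lam : ℂ) ∧ Complex.cos (μ * ↑(d / 2)) ≠ 0 ∧
      ∀ α : ℝ, (2 * μ * Complex.sin (μ * ↑(d / 2)) = ↑α * Complex.cos (μ * ↑(d / 2)) ↔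
        FN d lam = α) := by
  rcases lt_trichotomy lam 0 with hneg | hzero | hpos
  · -- negative case
    set ν := Real.sqrt (-lam) with hν
    have hν0 : 0 < ν := Real.sqrt_pos.mpr (by linarith)
    set s := ν * (d / 2) with hs
    have hs0 : 0 < s := mul_pos hν0 (by linarith)
    refine ⟨(ν : ℂ) * Complex.I, ?_, ?_, ?_⟩
    · have hsq : ν ^ 2 = -lam := Real.sq_sqrt (by linarith)
      rw [mul_pow, Complex.I_sq, ← Complex.ofReal_pow, hsq]
      push_cast
      ring
    · have harg : ((ν : ℂ) * Complex.I) * ↑(d / 2) = ↑s * Complex.I := by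
        rw [hs]; push_cast; ring
      rw [harg, Complex.cos_mul_I, ← Complex.ofReal_cosh]
      exact_mod_cast (Real.cosh_pos s).ne'
    · intro α
      have harg : ((ν : ℂ) * Complex.I) * ↑(d / 2) = ↑s * Complex.I := by
        rw [hs]; push_cast; ring
      rw [harg, Complex.cos_mul_I, Complex.sin_mul_I, ← Complex.ofReal_cosh,
        ← Complex.ofReal_sinh]
      have hL : 2 * ((ν : ℂ) * Complex.I) * (↑(Real.sinh s) * Complex.I)
          = ↑(-(2 * ν * Real.sinh s)) := by
        push_cast
        linear_combination (2 * (ν : ℂ) * Complex.sinh (s : ℂ)) * Complex.I_sq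
      rw [hL]
      have hFN : FN d lam = -2 * ν * Real.tanh s := by
        rw [FN, if_neg (by linarith), if_neg (by linarith)]
        congr 2
        rw [hs]; ring
      rw [hFN]
      have hiff : -(2 * ν * Real.sinh s) = α * Real.cosh s ↔ -2 * ν * Real.tanh s = α := by
        rw [Real.tanh_eq_sinh_div_cosh, ← mul_div_assoc,
          div_eq_iff (Real.cosh_pos s).ne']
        constructor <;> intro <;> linarith
      constructor
      · intro hC
        have : -(2 * ν * Real.sinh s) = α * Real.cosh s := by exact_mod_cast hC
        exact hiff.mp this
      · intro hR
        exact_mod_cast hiff.mpr hR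
  · -- zero case
    refine ⟨0, by rw [hzero]; simp, by simp, ?_⟩
    intro α
    rw [FN]
    simp only [hzero]
    norm_num
    constructor
    · intro h'
      have hα : α = 0 := by exact_mod_cast h'.symm
      exact hα.symm
    · intro h'
      have hα : α = 0 := by exact_mod_cast h'.symm
      exact_mod_cast hα.symm
  · -- positive case
    set r := Real.sqrt lam with hr
    have hr0 : 0 < r := Real.sqrt_pos.mpr hpos
    set t := r * (d / 2) with ht
    have ht0 : 0 < t := mul_pos hr0 (by linarith)
    have htlt : t < Real.pi / 2 := by
      have h1 : r < Real.pi / d := (Real.sqrt_lt' (div_pos Real.pi_pos hd)).mpr hlam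
      calc t = r * (d / 2) := ht
        _ < (Real.pi / d) * (d / 2) := by
            exact mul_lt_mul_of_pos_right h1 (by linarith)
        _ = Real.pi / 2 := by field_simp
    have hcos : 0 < Real.cos t := Real.cos_pos_of_mem_Ioo ⟨by linarith [Real.pi_pos], htlt⟩
    refine ⟨(r : ℂ), ?_, ?_, ?_⟩
    · have hsq : r ^ 2 = lam := Real.sq_sqrt hpos.le
      rw [← Complex.ofReal_pow, hsq]
    · have harg : ((r : ℂ)) * ↑(d / 2) = ↑t := by rw [ht]; push_cast; ring
      rw [harg, ← Complex.ofReal_cos]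
      exact_mod_cast hcos.ne'
    · intro α
      have harg : ((r : ℂ)) * ↑(d / 2) = ↑t := by rw [ht]; push_cast; ring
      rw [harg, ← Complex.ofReal_cos, ← Complex.ofReal_sin]
      have hFN : FN d lam = 2 * r * Real.tan t := by
        rw [FN, if_pos hpos]
        congr 2
        rw [ht]; ring
      rw [hFN]
      have hiff : 2 * r * Real.sin t = α * Real.cos t ↔ 2 * r * Real.tan t = α := by
        rw [Real.tan_eq_sin_div_cos, ← mul_div_assoc, div_eq_iff hcos.ne']
      constructor
      · intro hC
        have : 2 * r * Real.sin t = α * Real.cos t := by exact_mod_cast hC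
        exact hiff.mp this
      · intro hR
        exact_mod_cast hiff.mpr hR

private lemma tanh_lt_tanh' {a b : ℝ} (hab : a < b) : Real.tanh a < Real.tanh b := by
  rw [Real.tanh_eq_sinh_div_cosh, Real.tanh_eq_sinh_div_cosh,
    div_lt_div_iff₀ (Real.cosh_pos a) (Real.cosh_pos b)]
  have h1 : 0 < Real.sinh (b - a) := Real.sinh_pos_iff.mpr (sub_pos.mpr hab)
  rw [Real.sinh_sub] at h1
  linarith

private lemma FN_neg_lt (d : ℝ) (hd : 0 < d) (l : ℝ) (hl : l < 0) : FN d l < 0 := by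
  rw [FN, if_neg (by linarith), if_neg (by linarith)]
  have hν : 0 < Real.sqrt (-l) := Real.sqrt_pos.mpr (by linarith)
  have htanh : 0 < Real.tanh (d * Real.sqrt (-l) / 2) := by
    have := tanh_lt_tanh' (show (0:ℝ) < d * Real.sqrt (-l) / 2 by positivity)
    rwa [Real.tanh_zero] at this
  nlinarith

private lemma FN_pos_gt (d : ℝ) (hd : 0 < d) (l : ℝ) (hl : 0 < l)
    (hl2 : l < (Real.pi / d) ^ 2) : 0 < FN d l := by
  rw [FN, if_pos hl]
  have hr : 0 < Real.sqrt l := Real.sqrt_pos.mpr hl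
  have ht0 : 0 < d * Real.sqrt l / 2 := by positivity
  have h1 : Real.sqrt l < Real.pi / d := (Real.sqrt_lt' (div_pos Real.pi_pos hd)).mpr hl2
  have ht : d * Real.sqrt l / 2 < Real.pi / 2 := by
    have h2 := mul_lt_mul_of_pos_left h1 hd
    rw [mul_div_cancel₀ _ hd.ne'] at h2
    linarith
  have htan := Real.tan_pos_of_pos_of_lt_pi_div_two ht0 ht
  nlinarith

private lemma FN_zero (d : ℝ) : FN d 0 = 0 := by
  rw [FN]
  norm_num

private lemma FN_lt (d : ℝ) (hd : 0 < d) (l1 l2 : ℝ) (h12 : l1 < l2)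
    (h2 : l2 < (Real.pi / d) ^ 2) : FN d l1 < FN d l2 := by
  rcases lt_trichotomy l2 0 with hneg2 | hzero2 | hpos2
  · rw [FN, if_neg (by linarith), if_neg (by linarith),
      FN, if_neg (by linarith), if_neg (by linarith)]
    set n1 := Real.sqrt (-l1) with hn1
    set n2 := Real.sqrt (-l2) with hn2
    have hv2 : 0 < n2 := Real.sqrt_pos.mpr (by linarith)
    have hv12 : n2 < n1 := Real.sqrt_lt_sqrt (by linarith) (by linarith)
    have hs2 : 0 < d * n2 / 2 := by positivity
    have hs12 : d * n2 / 2 < d * n1 / 2 := by nlinarith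
    have ht2 : 0 < Real.tanh (d * n2 / 2) := by
      have := tanh_lt_tanh' hs2
      rwa [Real.tanh_zero] at this
    have ht12 : Real.tanh (d * n2 / 2) < Real.tanh (d * n1 / 2) := tanh_lt_tanh' hs12
    have key : n2 * Real.tanh (d * n2 / 2) < n1 * Real.tanh (d * n1 / 2) :=
      mul_lt_mul'' hv12 ht12 hv2.le ht2.le
    nlinarith
  · rw [hzero2, FN_zero]
    exact FN_neg_lt d hd l1 (by linarith)
  · rcases lt_trichotomy l1 0 with hneg1 | hzero1 | hpos1
    · exact (FN_neg_lt d hd l1 hneg1).trans (FN_pos_gt d hd l2 hpos2 h2)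
    · rw [hzero1, FN_zero]
      exact FN_pos_gt d hd l2 hpos2 h2
    · rw [FN, if_pos hpos1, FN, if_pos hpos2]
      set r1 := Real.sqrt l1 with hr1
      set r2 := Real.sqrt l2 with hr2
      have h01 : 0 < r1 := Real.sqrt_pos.mpr hpos1
      have h12' : r1 < r2 := Real.sqrt_lt_sqrt hpos1.le h12
      have ht10 : 0 < d * r1 / 2 := by positivity
      have ht12 : d * r1 / 2 < d * r2 / 2 := by nlinarith
      have hr2lt : r2 < Real.pi / d := (Real.sqrt_lt' (div_pos Real.pi_pos hd)).mpr h2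
      have ht2lt : d * r2 / 2 < Real.pi / 2 := by
        have h3 := mul_lt_mul_of_pos_left hr2lt hd
        rw [mul_div_cancel₀ _ hd.ne'] at h3
        linarith
      have htanlt : Real.tan (d * r1 / 2) < Real.tan (d * r2 / 2) :=
        Real.tan_lt_tan_of_nonneg_of_lt_pi_div_two ht10.le ht2lt ht12
      have htan1 : 0 < Real.tan (d * r1 / 2) :=
        Real.tan_pos_of_pos_of_lt_pi_div_two ht10 (lt_trans ht12 ht2lt)
      have key : r1 * Real.tan (d * r1 / 2) < r2 * Real.tan (d * r2 / 2) :=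
        mul_lt_mul'' h12' htanlt h01.le htan1.le
      nlinarith

/-- Let `Λ = Λ^N_{α,d}` be the (unique) solution of `F_d^N(Λ) = α` in `(-∞, (π/d)²)`,
`d = x₊ - x₋`. Then the set of `λ < (π/d)²` admitting a δ-Neumann eigenfunction for `(α, λ)`
is exactly `{Λ}`; the space of δ-Neumann eigenfunctions for `(α, Λ)` (together with `0`) is
one-dimensional; and for `λ = (π/d)²` a δ-Neumann eigenfunction exists for every `α ∈ ℝ`. -/
theorem stmt8 (xm xp : ℝ) (h : xm < xp) (α Λ : ℝ)
    (hΛ₁ : Λ < (Real.pi / (xp - xm)) ^ 2) (hΛ₂ : FN (xp - xm) Λ = α) :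
    {lam : ℝ | lam < (Real.pi / (xp - xm)) ^ 2 ∧
        ∃ u : ℝ → ℂ, IsDeltaNeumannEF xm xp α lam u} = {Λ} ∧
    (∃ u₀ : ℝ → ℂ, IsDeltaNeumannEF xm xp α Λ u₀ ∧
        ∀ u : ℝ → ℂ, IsDeltaNeumannEF xm xp α Λ u →
          ∃ c : ℂ, Set.EqOn u (fun x => c * u₀ x) (Set.Icc xm xp)) ∧
    (∀ α' : ℝ, ∃ u : ℝ → ℂ,
        IsDeltaNeumannEF xm xp α' ((Real.pi / (xp - xm)) ^ 2) u) := by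
  have hd : 0 < xp - xm := by linarith
  obtain ⟨μ, hμ2, hμcos, hμiff⟩ := FN_iff (xp - xm) hd Λ hΛ₁
  have hjumpΛ : 2 * μ * Complex.sin (μ * ↑((xp - xm) / 2))
      = ↑α * Complex.cos (μ * ↑((xp - xm) / 2)) := (hμiff α).mpr hΛ₂
  have hexΛ : IsDeltaNeumannEF xm xp α Λ (fun x =>
      if x ≤ (xm + xp) / 2 then 1 * Complex.cos (μ * (↑x - ↑xm))
      else 1 * Complex.cos (μ * (↑x - ↑xp))) := by
    apply eigen_construct xm xp h α Λ μ hμ2 1 1 one_ne_zero rfl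
    linear_combination hjumpΛ
  refine ⟨?_, ?_, ?_⟩
  · ext lam
    simp only [Set.mem_setOf_eq, Set.mem_singleton_iff]
    constructor
    · rintro ⟨hlt, u, hu⟩
      obtain ⟨μ', hμ2', hcos', hiff'⟩ := FN_iff (xp - xm) hd lam hlt
      obtain ⟨a, b, hab, hL, hR, hcc, hj⟩ := eigen_structure xm xp h α lam μ' hμ2' u hu
      have hba : a = b := mul_right_cancel₀ hcos' hcc
      have ha0 : a ≠ 0 := by
        rcases hab with h' | h'
        · exact h'
        · rwa [hba]
      have h2 : 2 * μ' * Complex.sin (μ' * ↑((xp - xm) / 2))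
          = ↑α * Complex.cos (μ' * ↑((xp - xm) / 2)) := by
        rw [← hba] at hj
        refine mul_left_cancel₀ ha0 ?_
        linear_combination hj
      have hFNlam : FN (xp - xm) lam = α := (hiff' α).mp h2
      by_contra hne
      rcases lt_or_gt_of_ne hne with hlt2 | hgt
      · have := FN_lt (xp - xm) hd lam Λ hlt2 hΛ₁
        rw [hFNlam, hΛ₂] at this
        exact lt_irrefl _ this
      · have := FN_lt (xp - xm) hd Λ lam hgt hlt
        rw [hFNlam, hΛ₂] at this
        exact lt_irrefl _ this
    · intro h'
      subst h'
      exact ⟨hΛ₁, _, hexΛ⟩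
  · refine ⟨_, hexΛ, ?_⟩
    intro u hu
    obtain ⟨a, b, hab, hL, hR, hcc, hj⟩ := eigen_structure xm xp h α Λ μ hμ2 u hu
    have hba : a = b := mul_right_cancel₀ hμcos hcc
    refine ⟨a, ?_⟩
    intro x hx
    by_cases hxy : x ≤ (xm + xp) / 2
    · rw [hL x ⟨hx.1, hxy⟩]
      simp only [if_pos hxy]
      ring
    · rw [hR x ⟨(lt_of_not_ge hxy).le, hx.2⟩]
      simp only [if_neg hxy]
      rw [hba]
      ring
  · intro α'
    have hμp2 : ((Real.pi / (xp - xm) : ℝ) : ℂ) ^ 2 = ((((Real.pi / (xp - xm)) ^ 2 : ℝ)) : ℂ) := by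
      push_cast
      ring
    have hne : ((xp : ℂ) - ↑xm) * 2 ≠ 0 := by
      have : (xp : ℂ) - ↑xm ≠ 0 := by
        rw [sub_ne_zero]
        exact_mod_cast (ne_of_gt h)
      exact mul_ne_zero this two_ne_zero
    have harg : ((Real.pi / (xp - xm) : ℝ) : ℂ) * ↑((xp - xm) / 2) = ↑(Real.pi / 2) := by
      push_cast
      field_simp
      ring
      rw [← sub_mul, mul_inv_cancel₀ (sub_ne_zero.mpr (by exact_mod_cast (ne_of_gt h)))]
    have hcos0 : Complex.cos (((Real.pi / (xp - xm) : ℝ) : ℂ) * ↑((xp - xm) / 2)) = 0 := by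
      rw [harg, ← Complex.ofReal_cos, Real.cos_pi_div_two]
      simp
    refine ⟨_, eigen_construct xm xp h α' ((Real.pi / (xp - xm)) ^ 2)
      ((Real.pi / (xp - xm) : ℝ) : ℂ) hμp2 1 (-1) one_ne_zero ?_ ?_⟩
    · rw [hcos0]
      ring
    · rw [hcos0]
      ring
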